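/- arXiv:math/0608689 — 4 statements merged into one kernel-verified Lean document; each statement's English description precedes it below -/
import Mathlib

section
/- There exists a constant C > 0 such that for all integers k, l ≥ 1 one has ∫₀¹ sin²(kπr) sin²(lπr) r^{-2} dr ≤ C · min(k, l). -/
open Real MeasureTheory intervalIntegral

lemma bee_aux (k l : ℕ) (hk : 1 ≤ k) (hl : 1 ≤ l) :
    (∫ r in (0:ℝ)..1,
        Real.sin ((k : ℝ) * π * r) ^ 2 * Real.sin ((l : ℝ) * π * r) ^ 2 / r ^ 2)
      ≤ 2 * π * k := by
  have hkπ : (1:ℝ) ≤ (k:ℝ) * π := by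
    have : (1:ℝ) ≤ (k:ℝ) := by exact_mod_cast hk
    nlinarith [Real.pi_gt_three]
  have hkπ0 : (0:ℝ) < (k:ℝ) * π := lt_of_lt_of_le one_pos hkπ
  set a : ℝ := ((k:ℝ) * π)⁻¹ with ha_def
  have ha0 : 0 < a := inv_pos.2 hkπ0
  have ha1 : a ≤ 1 := inv_le_one_of_one_le₀ hkπ
  set f : ℝ → ℝ := fun r =>
    Real.sin ((k : ℝ) * π * r) ^ 2 * Real.sin ((l : ℝ) * π * r) ^ 2 / r ^ 2 with hf_def
  have hfmeas : Measurable f := by fun_prop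
  have hbound : ∀ r : ℝ, f r ≤ ((k:ℝ)*π)^2 := by
    intro r
    rcases eq_or_ne r 0 with rfl | hr
    · simp [hf_def]
      positivity
    · have hr2 : (0:ℝ) < r ^ 2 := by positivity
      rw [hf_def, div_le_iff₀ hr2]
      have h1 : Real.sin ((k : ℝ) * π * r) ^ 2 ≤ ((k:ℝ)*π*r)^2 := Real.sin_sq_le_sq
      have h2 : Real.sin ((l : ℝ) * π * r) ^ 2 ≤ 1 := Real.sin_sq_le_one _
      have h3 : (0:ℝ) ≤ Real.sin ((k : ℝ) * π * r) ^ 2 := sq_nonneg _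
      nlinarith [sq_nonneg (Real.sin ((l : ℝ) * π * r))]
  have hfnn : ∀ r : ℝ, 0 ≤ f r := by
    intro r; rw [hf_def]; positivity
  have hInt1 : IntervalIntegrable f volume 0 a := by
    rw [intervalIntegrable_iff, Set.uIoc_of_le ha0.le]
    apply Measure.integrableOn_of_bounded (M := ((k:ℝ)*π)^2) measure_Ioc_lt_top.ne
      hfmeas.aestronglyMeasurable
    filter_upwards with x
    rw [Real.norm_eq_abs, abs_of_nonneg (hfnn x)]
    exact hbound x
  have hcont : ContinuousOn f (Set.uIcc a 1) := by
    apply ContinuousOn.div (by fun_prop) (by fun_prop)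
    intro x hx
    rw [Set.uIcc_of_le ha1] at hx
    have : 0 < x := lt_of_lt_of_le ha0 hx.1
    positivity
  have hInt2 : IntervalIntegrable f volume a 1 := hcont.intervalIntegrable
  have hsplit : (∫ r in (0:ℝ)..1, f r)
      = (∫ r in (0:ℝ)..a, f r) + ∫ r in a..1, f r :=
    (integral_add_adjacent_intervals hInt1 hInt2).symm
  have hI1 : (∫ r in (0:ℝ)..a, f r) ≤ (k:ℝ)*π := by
    have : (∫ r in (0:ℝ)..a, f r) ≤ ∫ _ in (0:ℝ)..a, ((k:ℝ)*π)^2 :=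
      integral_mono_on ha0.le hInt1 intervalIntegrable_const
        (fun x _ => hbound x)
    rw [intervalIntegral.integral_const, smul_eq_mul] at this
    calc (∫ r in (0:ℝ)..a, f r) ≤ (a - 0) * ((k:ℝ)*π)^2 := this
      _ = (k:ℝ)*π := by
          rw [ha_def]; field_simp; ring
  have hI2 : (∫ r in a..1, f r) ≤ (k:ℝ)*π - 1 := by
    have hmono : (∫ r in a..1, f r) ≤ ∫ r in a..1, r ^ (-2 : ℤ) := by
      apply integral_mono_on ha1 hInt2
      · apply ContinuousOn.intervalIntegrable
        apply ContinuousOn.zpow₀ continuousOn_id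
        intro x hx
        left
        rw [Set.uIcc_of_le ha1] at hx
        exact ne_of_gt (lt_of_lt_of_le ha0 hx.1)
      · intro x hx
        have hx0 : 0 < x := lt_of_lt_of_le ha0 hx.1
        rw [hf_def]
        have h2 : Real.sin ((l : ℝ) * π * x) ^ 2 ≤ 1 := Real.sin_sq_le_one _
        have h1 : Real.sin ((k : ℝ) * π * x) ^ 2 ≤ 1 := Real.sin_sq_le_one _
        have hx2 : (0:ℝ) < x ^ 2 := by positivity
        have hzp : (x:ℝ) ^ (-2:ℤ) = (x ^ 2)⁻¹ := by
          rw [zpow_neg]; norm_cast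
        rw [hzp, div_le_iff₀ hx2, inv_mul_cancel₀ hx2.ne']
        nlinarith [sq_nonneg (Real.sin ((k : ℝ) * π * x)), sq_nonneg (Real.sin ((l : ℝ) * π * x))]
    have hzpow : (∫ r in a..1, r ^ (-2 : ℤ)) = (k:ℝ)*π - 1 := by
      rw [integral_zpow]
      · rw [ha_def]; norm_num; ring
      · right
        constructor
        · norm_num
        · rw [Set.uIcc_of_le ha1]
          rintro ⟨h1, h2⟩
          exact absurd h1 (not_le.2 ha0)
    linarith
  calc (∫ r in (0:ℝ)..1, f r) = _ + _ := hsplit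
    _ ≤ (k:ℝ)*π + ((k:ℝ)*π - 1) := add_le_add hI1 hI2
    _ ≤ 2 * π * k := by nlinarith [Real.pi_pos]

/-- Bilinear eigenfunction estimate: the product of two `L²`-normalized radial Dirichlet
eigenfunctions `e_k(r) = sin(kπr)/r` on the unit ball of `ℝ³` satisfies
`‖e_k e_l‖_{L²(B)}² ≤ C min(k,l)`. -/
theorem bilinear_eigenfunction_estimate :
    ∃ C > (0 : ℝ), ∀ k l : ℕ, 1 ≤ k → 1 ≤ l →
      (∫ r in (0:ℝ)..1,
          Real.sin ((k : ℝ) * π * r) ^ 2 * Real.sin ((l : ℝ) * π * r) ^ 2 / r ^ 2)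
        ≤ C * min (k : ℝ) (l : ℝ) := by
  refine ⟨2 * π, by positivity, fun k l hk hl => ?_⟩
  rcases le_total (k:ℝ) (l:ℝ) with h | h
  · rw [min_eq_left h]
    exact bee_aux k l hk hl
  · rw [min_eq_right h]
    have hswap : (∫ r in (0:ℝ)..1,
          Real.sin ((k : ℝ) * π * r) ^ 2 * Real.sin ((l : ℝ) * π * r) ^ 2 / r ^ 2)
        = ∫ r in (0:ℝ)..1,
          Real.sin ((l : ℝ) * π * r) ^ 2 * Real.sin ((k : ℝ) * π * r) ^ 2 / r ^ 2 := by
      congr 1; funext r; ring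
    rw [hswap]
    exact bee_aux l k hl hk
end

section
/- There exists a constant C > 0 such that for all integers k, l ≥ 1 one has ∫₀¹ (kπ cos(kπr) − sin(kπr)/r)² sin²(lπr) r^{-2} dr ≤ C k² · min(k, l). -/
open Real MeasureTheory Set

/-!
Write `g(r) = K cos(Kr) - sin(Kr)/r` with `K = kπ`, `L = lπ` and `M = min K L`. Always
`|g| ≤ 2K`, and `|g(r)| ≤ K³r²/3` because `|x cos x - sin x| ≤ x³/3`. Hence the integrand
`g² sin²(Lr)/r²` is at most `4K²M²` on `[0, 1/M]` (by the second bound if `M = K`, by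
`|sin(Lr)| ≤ Lr` if `M = L`) and at most `4K²/r²` on `[1/M, 1]`, so the integral is at most
`8K²M = 8π³k² min(k, l)`.
-/

lemma abs_mul_cos_sub_sin_le {x : ℝ} (hx : 0 ≤ x) : |x * cos x - sin x| ≤ x ^ 3 / 3 := by
  have hderiv (y : ℝ) : HasDerivAt (fun y => y * cos y - sin y) (-(y * sin y)) y :=
    (((hasDerivAt_id' y).mul (hasDerivAt_cos y)).sub (hasDerivAt_sin y)).congr_deriv (by ring)
  have hcube (y : ℝ) : HasDerivAt (fun y : ℝ => y ^ 3 / 3) (y ^ 2) y :=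
    ((hasDerivAt_pow 3 y).div_const 3).congr_deriv (by norm_num)
  refine image_norm_le_of_norm_deriv_right_le_deriv_boundary (a := 0) (b := x)
    (fun y _ => (hderiv y).continuousAt.continuousWithinAt) (fun y _ => (hderiv y).hasDerivWithinAt)
    (by simp) hcube (fun y hy => ?_) ⟨hx, le_rfl⟩
  rw [norm_neg, norm_mul, Real.norm_eq_abs, Real.norm_eq_abs, abs_of_nonneg hy.1, sq]
  exact mul_le_mul_of_nonneg_left (abs_sin_le_abs.trans_eq (abs_of_nonneg hy.1)) hy.1

lemma integral_le_of_le_const_of_le_div_sq {f : ℝ → ℝ} {a b A B : ℝ}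
    (hf : IntervalIntegrable f volume 0 b) (ha : 0 < a) (hab : a ≤ b) (hB : 0 ≤ B)
    (hnear : ∀ r ∈ Icc 0 a, f r ≤ A) (hfar : ∀ r ∈ Icc a b, f r ≤ B / r ^ 2) :
    ∫ r in 0..b, f r ≤ a * A + B / a := by
  have h0a : IntervalIntegrable f volume 0 a := hf.mono_set (uIcc_subset_uIcc_left (by
    rw [uIcc_of_le (ha.le.trans hab)]; exact ⟨ha.le, hab⟩))
  have hab' : IntervalIntegrable f volume a b := hf.mono_set (uIcc_subset_uIcc_right (by
    rw [uIcc_of_le (ha.le.trans hab)]; exact ⟨ha.le, hab⟩))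
  have hzero : (0 : ℝ) ∉ uIcc a b := by rw [uIcc_of_le hab]; exact fun h => ha.not_ge h.1
  have hinv_sq : ∫ r in a..b, B / r ^ 2 = B * (a⁻¹ - b⁻¹) := by
    simp_rw [div_eq_mul_inv, ← zpow_natCast, ← zpow_neg]
    rw [intervalIntegral.integral_const_mul, integral_zpow (Or.inr ⟨by norm_num, hzero⟩)]
    congr 1
    norm_num
    ring
  have hnear_int : ∫ r in 0..a, f r ≤ a * A := by
    simpa using intervalIntegral.integral_mono_on ha.le h0a intervalIntegrable_const hnear
  have hfar_int : ∫ r in a..b, f r ≤ B / a := by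
    have hcont : ContinuousOn (fun r : ℝ => B / r ^ 2) (uIcc a b) :=
      continuousOn_const.div (continuousOn_pow 2) fun r hr =>
        pow_ne_zero 2 (ne_of_mem_of_not_mem hr hzero)
    calc ∫ r in a..b, f r ≤ ∫ r in a..b, B / r ^ 2 :=
          intervalIntegral.integral_mono_on hab hab' hcont.intervalIntegrable hfar
      _ = B * (a⁻¹ - b⁻¹) := hinv_sq
      _ ≤ B / a := by
          rw [div_eq_mul_inv]
          exact mul_le_mul_of_nonneg_left (sub_le_self _ (inv_nonneg.2 (ha.le.trans hab))) hB
  rw [← intervalIntegral.integral_add_adjacent_intervals h0a hab']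
  linarith

lemma abs_mul_cos_sub_sin_div_le_two_mul {K : ℝ} (hK : 0 ≤ K) (r : ℝ) :
    |K * cos (K * r) - sin (K * r) / r| ≤ 2 * K := by
  have hcos : |K * cos (K * r)| ≤ K := by
    rw [abs_mul, abs_of_nonneg hK]
    exact mul_le_of_le_one_right hK (abs_cos_le_one _)
  have hsin : |sin (K * r) / r| ≤ K := by
    rw [abs_div]
    refine div_le_of_le_mul₀ (abs_nonneg r) hK ?_
    exact abs_sin_le_abs.trans_eq (by rw [abs_mul, abs_of_nonneg hK])
  linarith [abs_sub (K * cos (K * r)) (sin (K * r) / r)]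

lemma abs_mul_cos_sub_sin_div_le_cube {K r : ℝ} (hK : 0 ≤ K) (hr : 0 < r) :
    |K * cos (K * r) - sin (K * r) / r| ≤ K ^ 3 * r ^ 2 / 3 := by
  have hrewrite : K * cos (K * r) - sin (K * r) / r = (K * r * cos (K * r) - sin (K * r)) / r := by
    field_simp
  rw [hrewrite, abs_div, abs_of_pos hr, div_le_iff₀ hr]
  exact (abs_mul_cos_sub_sin_le (by positivity)).trans_eq (by ring)

lemma gradient_mul_sin_sq_le_near_zero {K L r : ℝ} (hK : 0 ≤ K) (hr : 0 ≤ r)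
    (hrM : r * min K L ≤ 1) :
    (K * cos (K * r) - sin (K * r) / r) ^ 2 * sin (L * r) ^ 2 / r ^ 2
      ≤ 4 * K ^ 2 * min K L ^ 2 := by
  rcases hr.eq_or_lt with rfl | hr
  · norm_num
    positivity
  rw [div_le_iff₀ (by positivity)]
  have hsin_le_one : sin (L * r) ^ 2 ≤ 1 := sin_sq_le_one _
  rcases le_total K L with hKL | hLK
  · rw [min_eq_left hKL] at hrM ⊢
    have hg := sq_le_sq.2 ((abs_mul_cos_sub_sin_div_le_cube hK hr).trans (le_abs_self _))
    have hKr : (K * r) ^ 2 ≤ 1 := pow_le_one₀ (by positivity) (by linarith)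
    calc (K * cos (K * r) - sin (K * r) / r) ^ 2 * sin (L * r) ^ 2
        ≤ (K ^ 3 * r ^ 2 / 3) ^ 2 * 1 := mul_le_mul hg hsin_le_one (sq_nonneg _) (sq_nonneg _)
      _ = K ^ 4 * r ^ 2 * (K * r) ^ 2 / 9 := by ring
      _ ≤ 4 * K ^ 2 * K ^ 2 * r ^ 2 := by nlinarith [mul_nonneg (pow_nonneg hK 4) (sq_nonneg r)]
  · rw [min_eq_right hLK]
    have hg := sq_le_sq.2 ((abs_mul_cos_sub_sin_div_le_two_mul hK r).trans (le_abs_self _))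
    have hsin : sin (L * r) ^ 2 ≤ (L * r) ^ 2 := sq_le_sq.2 abs_sin_le_abs
    calc (K * cos (K * r) - sin (K * r) / r) ^ 2 * sin (L * r) ^ 2
        ≤ (2 * K) ^ 2 * (L * r) ^ 2 := mul_le_mul hg hsin (sq_nonneg _) (sq_nonneg _)
      _ = 4 * K ^ 2 * L ^ 2 * r ^ 2 := by ring

lemma gradient_mul_sin_sq_le_div_sq {K : ℝ} (hK : 0 ≤ K) (L r : ℝ) :
    (K * cos (K * r) - sin (K * r) / r) ^ 2 * sin (L * r) ^ 2 / r ^ 2 ≤ 4 * K ^ 2 / r ^ 2 := by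
  refine div_le_div_of_nonneg_right ?_ (sq_nonneg r)
  calc (K * cos (K * r) - sin (K * r) / r) ^ 2 * sin (L * r) ^ 2 ≤ (2 * K) ^ 2 * 1 :=
        mul_le_mul (sq_le_sq.2 ((abs_mul_cos_sub_sin_div_le_two_mul hK r).trans (le_abs_self _)))
          (sin_sq_le_one _) (sq_nonneg _) (sq_nonneg _)
    _ = 4 * K ^ 2 := by ring

theorem integral_gradient_mul_sin_sq_le {K L : ℝ} (hM : 1 ≤ min K L) :
    ∫ r in 0..1, (K * cos (K * r) - sin (K * r) / r) ^ 2 * sin (L * r) ^ 2 / r ^ 2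
      ≤ 8 * K ^ 2 * min K L := by
  set M := min K L
  have hK : 0 ≤ K := by linarith [min_le_left K L]
  have hMpos : 0 < M := by linarith
  by_cases hint : IntervalIntegrable
      (fun r => (K * cos (K * r) - sin (K * r) / r) ^ 2 * sin (L * r) ^ 2 / r ^ 2) volume 0 1
  · calc _ ≤ M⁻¹ * (4 * K ^ 2 * M ^ 2) + 4 * K ^ 2 / M⁻¹ :=
          integral_le_of_le_const_of_le_div_sq hint (inv_pos.2 hMpos) (inv_le_one_of_one_le₀ hM)
            (by positivity)
            (fun r hr => gradient_mul_sin_sq_le_near_zero hK hr.1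
              ((le_div_iff₀ hMpos).1 (by rw [one_div]; exact hr.2)))
            (fun r _ => gradient_mul_sin_sq_le_div_sq hK L r)
      _ = 8 * K ^ 2 * M := by field_simp; ring
  · rw [intervalIntegral.integral_undef hint]
    positivity

/-- Gradient bilinear eigenfunction estimate: for the radial Dirichlet eigenfunctions
`e_k(r) = sin(kπr)/r` on the unit ball of `ℝ³`, one has
`‖(∇e_k) e_l‖_{L²(B)}² ≤ C k² min(k,l)`. -/
theorem gradient_bilinear_eigenfunction_estimate :
    ∃ C > (0 : ℝ), ∀ k l : ℕ, 1 ≤ k → 1 ≤ l →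
      (∫ r in (0:ℝ)..1,
          ((k : ℝ) * π * Real.cos ((k : ℝ) * π * r)
              - Real.sin ((k : ℝ) * π * r) / r) ^ 2
            * Real.sin ((l : ℝ) * π * r) ^ 2 / r ^ 2)
        ≤ C * (k : ℝ) ^ 2 * min (k : ℝ) (l : ℝ) := by
  refine ⟨8 * π ^ 3, by positivity, fun k l hk hl => ?_⟩
  have hmin : min ((k : ℝ) * π) (l * π) = min (k : ℝ) l * π :=
    (min_mul_of_nonneg _ _ pi_pos.le).symm
  have hmin_ge : 1 ≤ min (k : ℝ) l := le_min (by exact_mod_cast hk) (by exact_mod_cast hl)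
  calc _ ≤ 8 * ((k : ℝ) * π) ^ 2 * min ((k : ℝ) * π) (l * π) :=
        integral_gradient_mul_sin_sq_le (by rw [hmin]; nlinarith [pi_gt_three])
    _ = 8 * π ^ 3 * (k : ℝ) ^ 2 * min (k : ℝ) l := by rw [hmin]; ring
end

section
/- Let α, β ∈ ℝ, let 1 < δ ≤ √(3/2), and define g(t) = t² + 2α t^{4/3} + (2β + α²) t^{2/3} for t > 0. There exist constants c > 0, C > 0 and N₀ > 0 such that for all N, L that are integer powers of δ with N₀ ≤ N ≤ L, every x ∈ [g(N) + g(L), g(δN) + g(δL)] and every t ∈ [N, δN], one has c L² ≤ x − g(t) ≤ C L². -/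
open Real

/-- The main part `g(t) = t² + 2α t^{4/3} + (2β + α²) t^{2/3}` of the asymptotic expansion
of `z_ν²`, where `z_ν` is the first positive zero of the Bessel function `J_ν`. -/
noncomputable def besselZeroSq (α β t : ℝ) : ℝ :=
  t ^ 2 + 2 * α * t ^ ((4 : ℝ) / 3) + (2 * β + α ^ 2) * t ^ ((2 : ℝ) / 3)

lemma besselZeroSq_close (α β : ℝ) (t : ℝ)
    (ht : (1 + 100 * (2 * |α| + |2 * β + α ^ 2|)) ^ ((3 : ℝ) / 2) ≤ t) :
    |besselZeroSq α β t - t ^ 2| ≤ t ^ 2 / 100 := by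
  set K : ℝ := 2 * |α| + |2 * β + α ^ 2| with hK
  have hK0 : 0 ≤ K := by positivity
  have hbase : (1 : ℝ) ≤ 1 + 100 * K := by linarith
  have hN₀1 : (1 : ℝ) ≤ (1 + 100 * K) ^ ((3 : ℝ) / 2) :=
    Real.one_le_rpow hbase (by norm_num)
  have ht1 : (1 : ℝ) ≤ t := le_trans hN₀1 ht
  have ht0 : (0 : ℝ) < t := lt_of_lt_of_le one_pos ht1
  -- t^(2/3) ≥ 1 + 100K
  have hpow : (1 + 100 * K) ≤ t ^ ((2 : ℝ) / 3) := by
    have h1 : ((1 + 100 * K) ^ ((3 : ℝ) / 2)) ^ ((2 : ℝ) / 3) ≤ t ^ ((2 : ℝ) / 3) :=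
      Real.rpow_le_rpow (Real.rpow_nonneg (by linarith) _) ht (by norm_num)
    rwa [← Real.rpow_mul (by linarith), show ((3 : ℝ) / 2) * (2 / 3) = 1 by norm_num,
      Real.rpow_one] at h1
  have h23 : t ^ ((2 : ℝ) / 3) ≤ t ^ ((4 : ℝ) / 3) :=
    Real.rpow_le_rpow_of_exponent_le ht1 (by norm_num)
  have h23pos : (0 : ℝ) < t ^ ((2 : ℝ) / 3) := Real.rpow_pos_of_pos ht0 _
  have h43pos : (0 : ℝ) < t ^ ((4 : ℝ) / 3) := Real.rpow_pos_of_pos ht0 _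
  have hmul : t ^ ((4 : ℝ) / 3) * t ^ ((2 : ℝ) / 3) = t ^ 2 := by
    rw [← Real.rpow_add ht0]
    norm_num
  have hE : |besselZeroSq α β t - t ^ 2| ≤ K * t ^ ((4 : ℝ) / 3) := by
    have : besselZeroSq α β t - t ^ 2
        = 2 * α * t ^ ((4 : ℝ) / 3) + (2 * β + α ^ 2) * t ^ ((2 : ℝ) / 3) := by
      simp [besselZeroSq]; ring
    rw [this]
    calc |2 * α * t ^ ((4 : ℝ) / 3) + (2 * β + α ^ 2) * t ^ ((2 : ℝ) / 3)|
        ≤ |2 * α * t ^ ((4 : ℝ) / 3)| + |(2 * β + α ^ 2) * t ^ ((2 : ℝ) / 3)| :=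
          abs_add_le _ _
      _ = 2 * |α| * t ^ ((4 : ℝ) / 3) + |2 * β + α ^ 2| * t ^ ((2 : ℝ) / 3) := by
          rw [abs_mul, abs_mul, abs_mul, abs_of_pos h43pos, abs_of_pos h23pos, abs_two]
      _ ≤ 2 * |α| * t ^ ((4 : ℝ) / 3) + |2 * β + α ^ 2| * t ^ ((4 : ℝ) / 3) := by
          have := abs_nonneg (2 * β + α ^ 2)
          nlinarith
      _ = K * t ^ ((4 : ℝ) / 3) := by ring
  have hfin : K * t ^ ((4 : ℝ) / 3) ≤ t ^ 2 / 100 := by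
    have h100 : 100 * K ≤ t ^ ((2 : ℝ) / 3) := by linarith
    nlinarith [hmul, h43pos]
  linarith

set_option maxHeartbeats 1000000 in
/-- Two-sided bound `c L² ≤ x − g(t) ≤ C L²` for `x ∈ [g(N)+g(L), g(δN)+g(δL)]` and
`t ∈ [N, δN]`, when `N ≤ L` are large powers of `δ`. -/
theorem besselZeroSq_two_sided_bound
    (α β : ℝ) (δ : ℝ) (hδ1 : 1 < δ) (hδ2 : δ ≤ Real.sqrt (3 / 2)) :
    ∃ c > (0 : ℝ), ∃ C > (0 : ℝ), ∃ N₀ > (0 : ℝ), ∀ N L : ℝ,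
      (∃ a : ℕ, N = δ ^ a) → (∃ b : ℕ, L = δ ^ b) →
      N₀ ≤ N → N ≤ L →
      ∀ x ∈ Set.Icc (besselZeroSq α β N + besselZeroSq α β L)
          (besselZeroSq α β (δ * N) + besselZeroSq α β (δ * L)),
      ∀ t ∈ Set.Icc N (δ * N),
        c * L ^ 2 ≤ x - besselZeroSq α β t ∧ x - besselZeroSq α β t ≤ C * L ^ 2 := by
  set N₀ : ℝ := (1 + 100 * (2 * |α| + |2 * β + α ^ 2|)) ^ ((3 : ℝ) / 2) with hN₀
  have hK0 : (0 : ℝ) ≤ 2 * |α| + |2 * β + α ^ 2| := by positivity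
  have hN₀1 : (1 : ℝ) ≤ N₀ := Real.one_le_rpow (by linarith) (by norm_num)
  have hδ0 : (0 : ℝ) < δ := lt_trans one_pos hδ1
  have hδsq : δ ^ 2 ≤ 3 / 2 := by
    nlinarith [Real.sq_sqrt (show (0 : ℝ) ≤ 3 / 2 by norm_num),
      Real.sqrt_nonneg (3 / 2 : ℝ)]
  refine ⟨93 / 200, by norm_num, 4, by norm_num, N₀, lt_of_lt_of_le one_pos hN₀1,
    fun N L _ _ hN hNL x hx t ht => ?_⟩
  have hN1 : (1 : ℝ) ≤ N := le_trans hN₀1 hN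
  have hN0 : (0 : ℝ) < N := lt_of_lt_of_le one_pos hN1
  have hL : N₀ ≤ L := le_trans hN hNL
  have hL0 : (0 : ℝ) < L := lt_of_lt_of_le hN0 hNL
  have hδN : N₀ ≤ δ * N := le_trans hN (by nlinarith)
  have hδL : N₀ ≤ δ * L := le_trans hL (by nlinarith)
  obtain ⟨ht1, ht2⟩ := ht
  have htN₀ : N₀ ≤ t := le_trans hN ht1
  have ht0 : (0 : ℝ) < t := lt_of_lt_of_le (lt_of_lt_of_le one_pos hN₀1) htN₀
  have e1 := besselZeroSq_close α β N hN
  have e2 := besselZeroSq_close α β L hL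
  have e3 := besselZeroSq_close α β (δ * N) hδN
  have e4 := besselZeroSq_close α β (δ * L) hδL
  have e5 := besselZeroSq_close α β t htN₀
  rw [abs_le] at e1 e2 e3 e4 e5
  obtain ⟨hx1, hx2⟩ := hx
  have hN2L2 : N ^ 2 ≤ L ^ 2 := by nlinarith
  have ht2sq : t ^ 2 ≤ δ ^ 2 * N ^ 2 := by nlinarith
  have hδNsq : (δ * N) ^ 2 = δ ^ 2 * N ^ 2 := by ring
  have hδLsq : (δ * L) ^ 2 = δ ^ 2 * L ^ 2 := by ring
  rw [hδNsq] at e3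
  rw [hδLsq] at e4
  have hB : δ ^ 2 * N ^ 2 ≤ 3 / 2 * N ^ 2 :=
    mul_le_mul_of_nonneg_right hδsq (sq_nonneg N)
  have hA : t ^ 2 ≤ 3 / 2 * N ^ 2 := le_trans ht2sq hB
  have hC : δ ^ 2 * L ^ 2 ≤ 3 / 2 * L ^ 2 :=
    mul_le_mul_of_nonneg_right hδsq (sq_nonneg L)
  constructor
  · linarith [e1.1, e2.1, e5.2, hA, hN2L2]
  · linarith [e3.2, e4.2, e5.1, hB, hC, hN2L2, sq_nonneg t]
end

section
/- Let T > 0. There exists a constant c_T > 0 such that for every sequence of real numbers (λ_n)_{n∈ℕ} and every finitely supported sequence of complex numbers (a_n)_{n∈ℕ}, one has ∫₀^T |Σ_n a_n e^{i λ_n t}|² dt ≤ c_T Σ_{l ∈ ℤ} ( Σ_{n : |λ_n − l| ≤ 1/2} |a_n| )². -/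
/-!
Round each frequency, `λₙ = rₙ + μₙ` with `rₙ ∈ ℤ` and `|μₙ| ≤ 1/2`. On a window
`[x, x + 2π]` the sum `f(t) = ∑ aₙ e^{iλₙt}` is the diagonal value `F(t, t)` of
`F(u, t) = ∑ aₙ e^{iμₙu} e^{irₙt}`, which for each fixed `u` is a trigonometric polynomial in `t`
with coefficients of modulus `|aₙ|`, and `∂ᵤF(u, ·)` is one with coefficients of modulus at most
`|aₙ|/2`. The fundamental theorem of calculus in `u` and Cauchy–Schwarz bound `|F(t, t)|²` by
`|F(x, t)|²` and the `L²` norm of `∂ᵤF(·, t)`; integrating in `t` and applying Parseval to each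
trigonometric polynomial bounds `∫ |f|²` over the window by a multiple of
`∑ₗ (∑_{rₙ = l} |aₙ|)²`. Finally `[0, T]` is covered by `⌈T / 2π⌉` windows.
-/

open Real MeasureTheory
open Complex (I)
open scoped Complex ComplexConjugate

lemma integral_cexp_I_int_mul (k : ℤ) (x : ℝ) :
    ∫ t in x..x + 2 * π, cexp (I * k * t) = if k = 0 then ((2 * π : ℝ) : ℂ) else 0 := by
  split_ifs with hk
  · simp [hk]
  have hk' : I * k ≠ 0 := mul_ne_zero Complex.I_ne_zero (by exact_mod_cast hk)
  have hperiodic : cexp (I * k * ↑(x + 2 * π)) = cexp (I * k * x) := by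
    rw [← mul_one (cexp (I * k * x)), ← Complex.exp_int_mul_two_pi_mul_I k, ← Complex.exp_add]
    push_cast
    ring_nf
  rw [integral_exp_mul_complex hk', hperiodic, sub_self, zero_div]

lemma integral_norm_sq_sum_cexp_I_int_mul (L : Finset ℤ) (C : ℤ → ℂ) (x : ℝ) :
    ∫ t in x..x + 2 * π, ‖∑ l ∈ L, C l * cexp (I * l * t)‖ ^ 2 = 2 * π * ∑ l ∈ L, ‖C l‖ ^ 2 := by
  have hterm (l m : ℤ) (t : ℝ) :
      C l * cexp (I * l * t) * conj (C m * cexp (I * m * t))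
        = C l * conj (C m) * cexp (I * ((l - m : ℤ) : ℂ) * t) := by
    rw [map_mul, ← Complex.exp_conj, mul_mul_mul_comm, ← Complex.exp_add]
    simp only [map_mul, Complex.conj_I, Complex.conj_ofReal, map_intCast]
    push_cast
    ring_nf
  apply Complex.ofReal_injective
  rw [← intervalIntegral.integral_ofReal]
  simp_rw [Complex.ofReal_pow, ← Complex.mul_conj', map_sum, Finset.sum_mul_sum, hterm]
  rw [intervalIntegral.integral_finsetSum fun l _ =>
      (by fun_prop : Continuous _).intervalIntegrable _ _,
    Complex.ofReal_mul, Complex.ofReal_sum, Finset.mul_sum]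
  refine Finset.sum_congr rfl fun l hl => ?_
  rw [intervalIntegral.integral_finsetSum fun m _ =>
    (by fun_prop : Continuous _).intervalIntegrable _ _]
  simp_rw [intervalIntegral.integral_const_mul, integral_cexp_I_int_mul, sub_eq_zero, mul_ite,
    mul_zero, Finset.sum_ite_eq, if_pos hl, Complex.mul_conj']
  push_cast
  ring

lemma integral_norm_sq_sum_cexp_I_int_mul_le {ι : Type*} (s : Finset ι) (c : ι → ℂ)
    (C : ι → ℝ) (hc : ∀ n ∈ s, ‖c n‖ ≤ C n) (r : ι → ℤ) (x : ℝ) :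
    ∫ t in x..x + 2 * π, ‖∑ n ∈ s, c n * cexp (I * r n * t)‖ ^ 2
      ≤ 2 * π * ∑ l ∈ s.image r, (∑ n ∈ s with r n = l, C n) ^ 2 := by
  have hgroup (t : ℝ) : ∑ n ∈ s, c n * cexp (I * r n * t)
      = ∑ l ∈ s.image r, (∑ n ∈ s with r n = l, c n) * cexp (I * l * t) := by
    rw [← Finset.sum_fiberwise_of_maps_to fun n hn => Finset.mem_image_of_mem r hn]
    refine Finset.sum_congr rfl fun l _ => ?_
    rw [Finset.sum_mul]
    exact Finset.sum_congr rfl fun n hn => by rw [(Finset.mem_filter.1 hn).2]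
  simp_rw [hgroup, integral_norm_sq_sum_cexp_I_int_mul]
  gcongr with l
  exact (norm_sum_le _ _).trans (Finset.sum_le_sum fun n hn => hc n (Finset.mem_filter.1 hn).1)

lemma sq_intervalIntegral_le {g : ℝ → ℝ} {a b : ℝ} (hab : a ≤ b)
    (hg : IntervalIntegrable g volume a b)
    (hg2 : IntervalIntegrable (fun u => g u ^ 2) volume a b) :
    (∫ u in a..b, g u) ^ 2 ≤ (b - a) * ∫ u in a..b, g u ^ 2 := by
  rcases hab.eq_or_lt with rfl | hab
  · simp
  have hba : 0 < b - a := sub_pos.2 hab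
  have hjensen := (even_two.convexOn_pow (𝕜 := ℝ)).map_set_average_le (μ := volume)
    (t := Set.uIoc a b) (continuous_pow 2).continuousOn isClosed_univ (by simp [hba.ne'])
    (by simp) (by simp) hg.def' hg2.def'
  rw [interval_average_eq_div, interval_average_eq_div, div_pow,
    div_le_div_iff₀ (by positivity) hba] at hjensen
  nlinarith

lemma norm_sq_le_of_hasDerivAt {E : Type*} [NormedAddCommGroup E] [NormedSpace ℝ E]
    [CompleteSpace E] {φ φ' : ℝ → E} (hφ : ∀ u, HasDerivAt φ (φ' u) u) (hφ' : Continuous φ')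
    {a b t : ℝ} (ht : t ∈ Set.Icc a b) :
    ‖φ t‖ ^ 2 ≤ 2 * ‖φ a‖ ^ 2 + 2 * ((b - a) * ∫ u in a..b, ‖φ' u‖ ^ 2) := by
  have hftc : ∫ u in a..t, φ' u = φ t - φ a :=
    intervalIntegral.integral_eq_sub_of_hasDerivAt (fun u _ => hφ u) (hφ'.intervalIntegrable _ _)
  have hincrement : ‖φ t - φ a‖ ≤ ∫ u in a..b, ‖φ' u‖ := by
    rw [← hftc]
    refine (intervalIntegral.norm_integral_le_integral_norm ht.1).trans ?_
    exact intervalIntegral.integral_mono_interval le_rfl ht.1 ht.2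
      (Filter.Eventually.of_forall fun u => norm_nonneg _) (hφ'.norm.intervalIntegrable _ _)
  have hcs := sq_intervalIntegral_le (ht.1.trans ht.2) (hφ'.norm.intervalIntegrable _ _)
    ((hφ'.norm.pow 2).intervalIntegrable _ _)
  have hsplit : ‖φ t‖ ^ 2 ≤ 2 * ‖φ a‖ ^ 2 + 2 * ‖φ t - φ a‖ ^ 2 := by
    have := norm_le_norm_add_norm_sub' (φ t) (φ a)
    nlinarith [norm_nonneg (φ t), sq_nonneg (‖φ a‖ - ‖φ t - φ a‖)]
  have := pow_le_pow_left₀ (norm_nonneg _) hincrement 2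
  linarith

lemma intervalIntegral_integral_swap {E : Type*} [NormedAddCommGroup E] [NormedSpace ℝ E]
    {f : ℝ → ℝ → E} (hf : Continuous (Function.uncurry f)) {a b c d : ℝ} (hab : a ≤ b)
    (hcd : c ≤ d) :
    ∫ x in a..b, ∫ y in c..d, f x y = ∫ y in c..d, ∫ x in a..b, f x y := by
  simp only [intervalIntegral.integral_of_le hab, intervalIntegral.integral_of_le hcd]
  apply integral_integral_swap
  rw [Measure.prod_restrict, ← Measure.volume_eq_prod]
  exact (hf.continuousOn.integrableOn_compact (isCompact_Icc.prod isCompact_Icc)).mono_set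
    (Set.prod_mono Set.Ioc_subset_Icc_self Set.Ioc_subset_Icc_self)

lemma integral_norm_sq_diag_le {E : Type*} [NormedAddCommGroup E] [NormedSpace ℝ E]
    [CompleteSpace E] {F F' : ℝ → ℝ → E} (hF : Continuous (Function.uncurry F))
    (hF' : Continuous (Function.uncurry F')) (hderiv : ∀ s t, HasDerivAt (F · t) (F' s t) s)
    {a b : ℝ} (hab : a ≤ b) :
    ∫ t in a..b, ‖F t t‖ ^ 2 ≤ 2 * (∫ t in a..b, ‖F a t‖ ^ 2)
      + 2 * ((b - a) * ∫ u in a..b, ∫ t in a..b, ‖F' u t‖ ^ 2) := by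
  have hpointwise (t : ℝ) (ht : t ∈ Set.Icc a b) :
      ‖F t t‖ ^ 2 ≤ 2 * ‖F a t‖ ^ 2 + 2 * ((b - a) * ∫ u in a..b, ‖F' u t‖ ^ 2) :=
    norm_sq_le_of_hasDerivAt (hderiv · t) (by fun_prop) ht
  have hint {g : ℝ → ℝ} (hg : Continuous g) : IntervalIntegrable g volume a b :=
    hg.intervalIntegrable _ _
  rw [intervalIntegral_integral_swap (by fun_prop) hab hab]
  calc ∫ t in a..b, ‖F t t‖ ^ 2
      ≤ ∫ t in a..b, (2 * ‖F a t‖ ^ 2 + 2 * ((b - a) * ∫ u in a..b, ‖F' u t‖ ^ 2)) :=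
        intervalIntegral.integral_mono_on hab (hint (by fun_prop)) (hint (by fun_prop)) hpointwise
    _ = _ := by
        rw [intervalIntegral.integral_add (hint (by fun_prop)) (hint (by fun_prop)),
          intervalIntegral.integral_const_mul, intervalIntegral.integral_const_mul,
          intervalIntegral.integral_const_mul]

lemma integral_norm_sq_sum_cexp_I_mul_le_of_near_int {ι : Type*} (s : Finset ι) (a : ι → ℂ)
    (lam : ι → ℝ) (r : ι → ℤ) {δ : ℝ} (hδ : ∀ n ∈ s, |lam n - r n| ≤ δ) (x : ℝ) :
    ∫ t in x..x + 2 * π, ‖∑ n ∈ s, a n * cexp (I * lam n * t)‖ ^ 2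
      ≤ 4 * π * (1 + 4 * π ^ 2 * δ ^ 2) * ∑ l ∈ s.image r, (∑ n ∈ s with r n = l, ‖a n‖) ^ 2 := by
  set μ : ι → ℝ := fun n => lam n - r n
  set F : ℝ → ℝ → ℂ := fun u t => ∑ n ∈ s, (a n * cexp (I * μ n * u)) * cexp (I * r n * t)
  set F' : ℝ → ℝ → ℂ := fun u t =>
    ∑ n ∈ s, (a n * (I * μ n) * cexp (I * μ n * u)) * cexp (I * r n * t)
  set A := ∑ l ∈ s.image r, (∑ n ∈ s with r n = l, ‖a n‖) ^ 2
  have hdiag (t : ℝ) : ∑ n ∈ s, a n * cexp (I * lam n * t) = F t t := by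
    refine Finset.sum_congr rfl fun n _ => ?_
    rw [mul_assoc (a n), ← Complex.exp_add]
    congr 2
    simp only [μ]
    push_cast
    ring
  have hderiv (u t : ℝ) : HasDerivAt (F · t) (F' u t) u := by
    refine HasDerivAt.fun_sum fun n _ => ?_
    have := (((hasDerivAt_id (u : ℂ)).const_mul (I * μ n)).cexp.const_mul (a n)).mul_const
      (cexp (I * r n * t))
    exact this.comp_ofReal.congr_deriv (by simp only [id, mul_one]; ring)
  have hF_at (u : ℝ) : ∫ t in x..x + 2 * π, ‖F u t‖ ^ 2 ≤ 2 * π * A :=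
    integral_norm_sq_sum_cexp_I_int_mul_le s _ (fun n => ‖a n‖)
      (fun n _ => by simp [Complex.norm_exp]) r x
  have hF'_at (u : ℝ) : ∫ t in x..x + 2 * π, ‖F' u t‖ ^ 2 ≤ 2 * π * (δ ^ 2 * A) := by
    have hcoeff (n : ι) (hn : n ∈ s) : ‖a n * (I * μ n) * cexp (I * μ n * u)‖ ≤ δ * ‖a n‖ :=
      calc ‖a n * (I * μ n) * cexp (I * μ n * u)‖ = |μ n| * ‖a n‖ := by
            simp [Complex.norm_exp, mul_comm]
        _ ≤ δ * ‖a n‖ := by gcongr; exact hδ n hn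
    refine (integral_norm_sq_sum_cexp_I_int_mul_le s _ _ hcoeff r x).trans_eq ?_
    simp_rw [← Finset.mul_sum, mul_pow, ← Finset.mul_sum]
    rfl
  have hF'_total : ∫ u in x..x + 2 * π, ∫ t in x..x + 2 * π, ‖F' u t‖ ^ 2
      ≤ 2 * π * (2 * π * (δ ^ 2 * A)) :=
    calc ∫ u in x..x + 2 * π, ∫ t in x..x + 2 * π, ‖F' u t‖ ^ 2
        ≤ ∫ u in x..x + 2 * π, 2 * π * (δ ^ 2 * A) :=
          intervalIntegral.integral_mono_on (by linarith [pi_pos])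
            ((by fun_prop : Continuous _).intervalIntegrable _ _) intervalIntegrable_const
            fun u _ => hF'_at u
      _ = 2 * π * (2 * π * (δ ^ 2 * A)) := by simp; ring
  calc ∫ t in x..x + 2 * π, ‖∑ n ∈ s, a n * cexp (I * lam n * t)‖ ^ 2
      = ∫ t in x..x + 2 * π, ‖F t t‖ ^ 2 := by simp_rw [hdiag]
    _ ≤ 2 * (∫ t in x..x + 2 * π, ‖F x t‖ ^ 2)
          + 2 * ((x + 2 * π - x) * ∫ u in x..x + 2 * π, ∫ t in x..x + 2 * π, ‖F' u t‖ ^ 2) :=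
        integral_norm_sq_diag_le (by fun_prop) (by fun_prop) hderiv (by linarith [pi_pos])
    _ ≤ 2 * (2 * π * A) + 2 * ((x + 2 * π - x) * (2 * π * (2 * π * (δ ^ 2 * A)))) := by
        gcongr
        · exact hF_at x
        · linarith [pi_pos]
    _ = 4 * π * (1 + 4 * π ^ 2 * δ ^ 2) * A := by ring

lemma integral_le_natCeil_mul_of_forall_window_le {F : ℝ → ℝ} (hF : Continuous F)
    (hF0 : ∀ t, 0 ≤ F t) {p B : ℝ} (hp : 0 < p) (hB : ∀ x, ∫ t in x..x + p, F t ≤ B) {T : ℝ}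
    (hT : 0 ≤ T) :
    ∫ t in (0 : ℝ)..T, F t ≤ ⌈T / p⌉₊ * B := by
  set K := ⌈T / p⌉₊
  have hTK : T ≤ K * p := (div_le_iff₀ hp).1 (Nat.le_ceil _)
  calc ∫ t in (0 : ℝ)..T, F t
      ≤ ∫ t in (0 : ℝ)..K * p, F t :=
        intervalIntegral.integral_mono_interval le_rfl hT hTK
          (Filter.Eventually.of_forall hF0) (hF.intervalIntegrable _ _)
    _ = ∑ k ∈ Finset.range K, ∫ t in k * p..(k + 1) * p, F t := by
        simpa using (intervalIntegral.sum_integral_adjacent_intervals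
          (a := fun k : ℕ => k * p) fun k _ => hF.intervalIntegrable _ _).symm
    _ ≤ ∑ k ∈ Finset.range K, B :=
        Finset.sum_le_sum fun k _ => by simpa [add_mul] using hB (k * p)
    _ = K * B := by simp

lemma sum_image_round_sq_le_tsum {ι : Type*} (s : Finset ι) (lam : ι → ℝ) {w : ι → ℝ}
    (hw : ∀ n, 0 ≤ w n) :
    ∑ l ∈ s.image (fun n => round (lam n)), (∑ n ∈ s with round (lam n) = l, w n) ^ 2
      ≤ ∑' l : ℤ, (∑ n ∈ s, if |lam n - l| ≤ 1 / 2 then w n else 0) ^ 2 := by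
  have hsummable :
      Summable fun l : ℤ => (∑ n ∈ s, if |lam n - l| ≤ 1 / 2 then w n else 0) ^ 2 := by
    refine summable_of_ne_finset_zero
      (s := s.biUnion fun n => Finset.Icc ⌈lam n - 1 / 2⌉ ⌊lam n + 1 / 2⌋) fun l hl => ?_
    rw [Finset.sum_eq_zero fun n hn => if_neg fun hnear => hl ?_, zero_pow two_ne_zero]
    rw [abs_le] at hnear
    exact Finset.mem_biUnion.2 ⟨n, hn, Finset.mem_Icc.2
      ⟨Int.ceil_le.2 (by linarith), Int.le_floor.2 (by linarith)⟩⟩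
  refine (Finset.sum_le_sum fun l _ => ?_).trans
    (hsummable.sum_le_tsum _ fun l _ => sq_nonneg _)
  gcongr
  · exact Finset.sum_nonneg fun n _ => hw n
  rw [Finset.sum_filter]
  refine Finset.sum_le_sum fun n _ => ?_
  split_ifs with hround hnear hnear
  · exact le_rfl
  · exact absurd (hround ▸ abs_sub_round (lam n)) hnear
  · exact hw n
  · exact le_rfl

/-- Almost-orthogonality estimate for exponentials with arbitrary real frequencies on a
finite time interval: `∫₀^T |Σ a_n e^{iλ_n t}|² dt ≤ c_T Σ_{l∈ℤ} (Σ_{|λ_n − l| ≤ 1/2} |a_n|)²`. -/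
theorem almost_orthogonality_exponentials (T : ℝ) (hT : 0 < T) :
    ∃ c > (0 : ℝ), ∀ lam : ℕ → ℝ, ∀ a : ℕ → ℂ,
      (Function.support a).Finite →
      (∫ t in (0:ℝ)..T, ‖∑' n : ℕ, a n * Complex.exp (Complex.I * (lam n : ℂ) * (t : ℂ))‖ ^ 2)
        ≤ c * ∑' l : ℤ, (∑' n : ℕ, if |lam n - (l : ℝ)| ≤ 1 / 2 then ‖a n‖ else 0) ^ 2 := by
  refine ⟨⌈T / (2 * π)⌉₊ * (4 * π * (1 + 4 * π ^ 2 * (1 / 2) ^ 2)),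
    mul_pos (Nat.cast_pos.2 (Nat.ceil_pos.2 (by positivity))) (by positivity), fun lam a ha => ?_⟩
  set s := ha.toFinset
  have hzero (n : ℕ) (hn : n ∉ s) : a n = 0 := by simpa [s] using hn
  have hlhs (t : ℝ) :
      ∑' n, a n * cexp (I * lam n * t) = ∑ n ∈ s, a n * cexp (I * lam n * t) :=
    tsum_eq_sum fun n hn => by simp [hzero n hn]
  have hrhs (l : ℤ) : (∑' n, if |lam n - l| ≤ 1 / 2 then ‖a n‖ else 0)
      = ∑ n ∈ s, if |lam n - l| ≤ 1 / 2 then ‖a n‖ else 0 :=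
    tsum_eq_sum fun n hn => by simp [hzero n hn]
  simp only [hlhs, hrhs]
  calc _ ≤ ⌈T / (2 * π)⌉₊ * (4 * π * (1 + 4 * π ^ 2 * (1 / 2) ^ 2) *
        ∑ l ∈ s.image (fun n => round (lam n)), (∑ n ∈ s with round (lam n) = l, ‖a n‖) ^ 2) :=
        integral_le_natCeil_mul_of_forall_window_le (by fun_prop) (fun t => sq_nonneg _)
          (by positivity)
          (integral_norm_sq_sum_cexp_I_mul_le_of_near_int s a lam _ fun n _ => abs_sub_round _)
          hT.le
    _ ≤ _ := by
        rw [← mul_assoc]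
        gcongr
        exact sum_image_round_sq_le_tsum s lam fun n => norm_nonneg _
end
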